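/- (Theorem 1.1, existence of consistent paths) Let x, y ∈ ℤ × ℤ be unimodular pairs with |det(x,y)| ≥ 2. Then for each sign ε ∈ {+1, −1} there exists a consistent path of sign ε from x to y in the distant graph. -/

import Mathlib

/-- The determinant of two integer vectors in the plane. -/
def det (x y : ℤ × ℤ) : ℤ := x.1 * y.2 - x.2 * y.1

/-- A path of length `n` from `x` to `y` in the distant graph of `P(ℤ)`, given by its
sequence of vertices `z 0 = x, …, z n = y`: all vertices are unimodular pairs,
consecutive vertices are distant (`|det| = 1`), and distinct indices give distinct
projective points (`z i ≠ ± z j`). -/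
def IsPath (x y : ℤ × ℤ) (n : ℕ) (z : ℕ → ℤ × ℤ) : Prop :=
  z 0 = x ∧ z n = y ∧
  (∀ i, i ≤ n → Int.gcd (z i).1 (z i).2 = 1) ∧
  (∀ i, i < n → |det (z i) (z (i + 1))| = 1) ∧
  (∀ i j, i ≤ n → j ≤ n → i ≠ j → z i ≠ z j ∧ z i ≠ -z j)

/-- A consistent path of sign `ε` from `x` to `y`: a path all of whose intermediate
vertices `z i = α • x + β • y` (coefficients over `ℚ`) satisfy `ε * α * β > 0`, i.e. they
all lie in the same pair of opposite open cones determined by `x` and `y`. -/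
def IsConsistentPath (x y : ℤ × ℤ) (ε : ℚ) (n : ℕ) (z : ℕ → ℤ × ℤ) : Prop :=
  IsPath x y n z ∧
  ∀ i, 0 < i → i < n → ∃ α β : ℚ,
    ((z i).1 : ℚ) = α * x.1 + β * y.1 ∧ ((z i).2 : ℚ) = α * x.2 + β * y.2 ∧
    ε * (α * β) > 0

/-! Induction on `|det x y|`. Pick `u` with `det x u = 1`. The vertices adjacent to `x` are the
`±(u + t • x)`, and `det (u + t • x) y` runs through the residue class of `det u y` modulo
`D = det x y`. As `y` is unimodular, `det u y` is coprime to `D`, so for `|D| ≥ 2` this class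
contains some `d ≠ 0` with `|d| < |D|`, of either sign. This gives a first step `z₁` that lies in the
open cone spanned by `ε • x` and `y` and is closer to `y`. A consistent path of sign `+1` from
`z₁` to `y` stays in the cone spanned by `z₁` and `y`, which is contained in the first one. The
vertices are pairwise distinct up to sign because `|det (z i) y|` strictly decreases. -/

/-- `z = α • a + β • b` with `α, β > 0`; by Cramer's rule `α = det z b / det a b` and
`β = det a z / det a b`. -/
def InCone (a b z : ℤ × ℤ) : Prop :=
  0 < det a z * det a b ∧ 0 < det z b * det a b

lemma det_self (a : ℤ × ℤ) : det a a = 0 := by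
  simp only [det]; ring

lemma det_neg_left (a b : ℤ × ℤ) : det (-a) b = -det a b := by
  simp only [det, Prod.fst_neg, Prod.snd_neg]; ring

lemma det_smul_left (c : ℤ) (a b : ℤ × ℤ) : det (c • a) b = c * det a b := by
  simp only [det, Prod.smul_fst, Prod.smul_snd, smul_eq_mul]; ring

lemma isCoprime_of_abs_det_eq_one {a b : ℤ × ℤ} (h : |det a b| = 1) :
    IsCoprime a.1 a.2 ∧ IsCoprime b.1 b.2 := by
  have hsq : det a b * det a b = 1 := by rw [← abs_mul_abs_self, h, one_mul]
  unfold det at hsq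
  exact ⟨⟨b.2 * det a b, -b.1 * det a b, by simp only [det]; linear_combination hsq⟩,
    ⟨-a.2 * det a b, a.1 * det a b, by simp only [det]; linear_combination hsq⟩⟩

lemma exists_det_eq_one {x : ℤ × ℤ} (hx : IsCoprime x.1 x.2) : ∃ u, det x u = 1 := by
  obtain ⟨a, b, hab⟩ := hx
  exact ⟨(-b, a), by simp only [det]; linear_combination hab⟩

lemma isCoprime_det_of_det_eq_one {x u y : ℤ × ℤ} (hxu : det x u = 1)
    (hy : IsCoprime y.1 y.2) : IsCoprime (det u y) (det x y) := by
  obtain ⟨p, q, hpq⟩ := hy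
  refine ⟨-(p * x.1 + q * x.2), p * u.1 + q * u.2, ?_⟩
  simp only [det] at hxu ⊢
  linear_combination (p * y.1 + q * y.2) * hxu + hpq

lemma exists_modEq_mul_pos_abs_lt {c D : ℤ} (hD : D ≠ 0) (hc : ¬ D ∣ c) {s : ℤ} (hs : s ≠ 0) :
    ∃ d, d ≡ c [ZMOD D] ∧ 0 < s * d ∧ |d| < |D| := by
  have hr0 : 0 ≤ c % D := Int.emod_nonneg c hD
  have hrD : c % D < |D| := Int.emod_lt_abs c hD
  have hr : c % D ≠ 0 := fun h => hc (Int.dvd_of_emod_eq_zero h)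
  rcases hs.lt_or_gt with hs | hs
  · refine ⟨c % D - |D|, ?_, mul_pos_of_neg_of_neg hs (by linarith), ?_⟩
    · simpa using (Int.mod_modEq c D).sub (Int.modEq_zero_iff_dvd.mpr (self_dvd_abs D))
    · rw [abs_lt]; constructor <;> omega
  · exact ⟨c % D, Int.mod_modEq c D, mul_pos hs (by omega), by rwa [abs_of_nonneg hr0]⟩

lemma InCone.trans {a b z w : ℤ × ℤ} (hz : InCone a b z) (hw : InCone z b w) : InCone a b w := by
  obtain ⟨hz₁, hz₂⟩ := hz
  obtain ⟨hw₁, hw₂⟩ := hw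
  have hd2 : 0 < det z b ^ 2 := pow_two_pos_of_ne_zero (left_ne_zero_of_mul hz₂.ne')
  have hD2 : 0 < det a b ^ 2 := pow_two_pos_of_ne_zero (right_ne_zero_of_mul hz₂.ne')
  constructor
  · -- Plücker relation: `det a w * det z b = det a z * det w b + det a b * det z w`
    refine (mul_pos_iff_of_pos_right hd2).mp ?_
    calc 0 < det a z * det a b * (det w b * det z b) + det z w * det z b * det a b ^ 2 :=
          add_pos (mul_pos hz₁ hw₂) (mul_pos hw₁ hD2)
      _ = det a w * det a b * det z b ^ 2 := by simp only [det]; ring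
  · refine (mul_pos_iff_of_pos_right hd2).mp ?_
    calc 0 < det w b * det z b * (det z b * det a b) := mul_pos hw₂ hz₂
      _ = det w b * det a b * det z b ^ 2 := by ring

lemma exists_inCone_step {x y : ℤ × ℤ} (hx : IsCoprime x.1 x.2) (hy : IsCoprime y.1 y.2)
    (hD : 2 ≤ |det x y|) {ε : ℤ} (hε : ε ≠ 0) :
    ∃ z, |det x z| = 1 ∧ InCone (ε • x) y z ∧ |det z y| < |det x y| := by
  obtain ⟨u, hu⟩ := exists_det_eq_one hx
  have hD0 : det x y ≠ 0 := by rintro h; simp [h] at hD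
  have hndvd : ¬ det x y ∣ det u y := fun h => by
    have := (isCoprime_det_of_det_eq_one hu hy).isUnit_of_dvd' h dvd_rfl
    rw [Int.isUnit_iff_abs_eq] at this
    linarith
  obtain ⟨d, hdu, hεd, hdD⟩ := exists_modEq_mul_pos_abs_lt hD0 hndvd hε
  obtain ⟨t, ht⟩ := hdu.symm.dvd
  set σ := (det x y).sign
  have hσD : 0 < σ * det x y := by rw [Int.sign_mul_self_eq_abs]; positivity
  have hxz : det x (σ • (u + t • x)) = σ := by
    simp only [det, Prod.smul_fst, Prod.smul_snd, Prod.fst_add, Prod.snd_add, smul_eq_mul]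
      at hu ⊢
    linear_combination σ * hu
  have hzy : det (σ • (u + t • x)) y = σ * d := by
    simp only [det, Prod.smul_fst, Prod.smul_snd, Prod.fst_add, Prod.snd_add, smul_eq_mul]
      at ht ⊢
    linear_combination -σ * ht
  refine ⟨σ • (u + t • x), by rw [hxz]; exact Int.abs_sign_of_ne_zero hD0, ⟨?_, ?_⟩, ?_⟩
  · rw [det_smul_left, hxz, det_smul_left]
    calc 0 < ε * ε * (σ * det x y) := mul_pos (mul_self_pos.mpr hε) hσD
      _ = ε * σ * (ε * det x y) := by ring
  · rw [hzy, det_smul_left]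
    calc 0 < ε * d * (σ * det x y) := mul_pos hεd hσD
      _ = σ * d * (ε * det x y) := by ring
  · rwa [hzy, abs_mul, Int.abs_sign_of_ne_zero hD0, one_mul]

structure IsConePath (ε : ℤ) (x y : ℤ × ℤ) (n : ℕ) (z : ℕ → ℤ × ℤ) : Prop where
  zero : z 0 = x
  last : z n = y
  adj : ∀ i < n, |det (z i) (z (i + 1))| = 1
  inCone : ∀ i, 0 < i → i < n → InCone (ε • x) y (z i)
  desc : ∀ i < n, |det (z (i + 1)) y| < |det (z i) y|

lemma IsConePath.cons {ε : ℤ} {x y z₁ : ℤ × ℤ} {n : ℕ} {w : ℕ → ℤ × ℤ}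
    (hw : IsConePath 1 z₁ y n w) (hxz : |det x z₁| = 1) (hz : InCone (ε • x) y z₁)
    (hzy : |det z₁ y| < |det x y|) :
    IsConePath ε x y (n + 1) (fun | 0 => x | i + 1 => w i) where
  zero := rfl
  last := hw.last
  adj := by
    rintro (_ | i) hi
    · simpa [hw.zero] using hxz
    · exact hw.adj i (by omega)
  inCone := by
    rintro (_ | _ | i) h0 hi
    · omega
    · simpa [hw.zero] using hz
    · simpa using hz.trans (by simpa using hw.inCone (i + 1) (by omega) (by omega))
  desc := by
    rintro (_ | i) hi
    · simpa [hw.zero] using hzy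
    · exact hw.desc i (by omega)

theorem exists_isConePath {x y : ℤ × ℤ} (hx : IsCoprime x.1 x.2) (hy : IsCoprime y.1 y.2)
    (hD : det x y ≠ 0) {ε : ℤ} (hε : ε ≠ 0) : ∃ n z, IsConePath ε x y n z := by
  induction h : (det x y).natAbs using Nat.strong_induction_on generalizing x ε with
  | _ m ih =>
  rcases lt_or_ge |det x y| 2 with hD1 | hD2
  · have hD1 : |det x y| = 1 := by have := abs_pos.mpr hD; omega
    refine ⟨1, fun | 0 => x | _ => y, rfl, rfl, ?_, fun i h0 hi => by omega, ?_⟩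
    · intro i hi
      obtain rfl : i = 0 := by omega
      exact hD1
    · intro i hi
      obtain rfl : i = 0 := by omega
      simpa [det_self] using hD
  · obtain ⟨z₁, hxz, hz, hzy⟩ := exists_inCone_step hx hy hD2 hε
    have hd : det z₁ y ≠ 0 := left_ne_zero_of_mul hz.2.ne'
    have hlt : (det z₁ y).natAbs < m := by rw [← h]; zify; exact hzy
    obtain ⟨n, w, hw⟩ := ih _ hlt (isCoprime_of_abs_det_eq_one hxz).2 hd one_ne_zero rfl
    exact ⟨n + 1, _, hw.cons hxz hz hzy⟩

lemma IsConePath.isPath {ε : ℤ} {x y : ℤ × ℤ} {n : ℕ} {z : ℕ → ℤ × ℤ}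
    (h : IsConePath ε x y n z) (hy : IsCoprime y.1 y.2) : IsPath x y n z := by
  refine ⟨h.zero, h.last, fun i hi => Int.isCoprime_iff_gcd_eq_one.mp ?_, h.adj,
    fun i j hi hj hij => ?_⟩
  · rcases hi.lt_or_eq with hi | rfl
    · exact (isCoprime_of_abs_det_eq_one (h.adj i hi)).1
    · rwa [h.last]
  · have hanti : StrictAntiOn (fun i => |det (z i) y|) (Set.Iic n) :=
      strictAntiOn_Iic_of_succ_lt (by simpa using h.desc)
    have hne := hanti.injOn.ne (Set.mem_Iic.mpr hi) (Set.mem_Iic.mpr hj) hij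
    exact ⟨fun e => hne (by simp only [e]),
      fun e => hne (by simp only [e, det_neg_left, abs_neg])⟩

lemma InCone.exists_coeffs {ε : ℤ} {x y z : ℤ × ℤ} (h : InCone (ε • x) y z) :
    ∃ α β : ℚ, (z.1 : ℚ) = α * x.1 + β * y.1 ∧ (z.2 : ℚ) = α * x.2 + β * y.2 ∧
      (ε : ℚ) * (α * β) > 0 := by
  obtain ⟨h₁, h₂⟩ := h
  simp only [det_smul_left] at h₁ h₂
  have hεD : ε * det x y ≠ 0 := right_ne_zero_of_mul h₂.ne'
  have hD : (det x y : ℚ) ≠ 0 := by exact_mod_cast right_ne_zero_of_mul hεD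
  have hpos : 0 < ε * (det z y * det x z) := by
    refine (mul_pos_iff_of_pos_right (by positivity : 0 < (ε * det x y) ^ 2)).mp ?_
    calc 0 < ε * det x z * (ε * det x y) * (det z y * (ε * det x y)) := mul_pos h₁ h₂
      _ = _ := by ring
  refine ⟨det z y / det x y, det x z / det x y, ?_, ?_, ?_⟩
  · field_simp; simp only [det]; push_cast; ring
  · field_simp; simp only [det]; push_cast; ring
  · calc (ε : ℚ) * (det z y / det x y * (det x z / det x y))
        = ((ε * (det z y * det x z) : ℤ) : ℚ) / (det x y : ℚ) ^ 2 := by push_cast; ring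
      _ > 0 := div_pos (by exact_mod_cast hpos) (by positivity)

/-- Theorem 1.1 (existence): for non-adjacent `x, y` and each sign `ε = ±1` there is a
consistent path of sign `ε` from `x` to `y` in the distant graph. -/
theorem exists_consistent_path (x y : ℤ × ℤ)
    (hx : Int.gcd x.1 x.2 = 1) (hy : Int.gcd y.1 y.2 = 1)
    (hdet : 2 ≤ |det x y|) (ε : ℚ) (hε : ε = 1 ∨ ε = -1) :
    ∃ n z, IsConsistentPath x y ε n z := by
  obtain ⟨e, rfl, he⟩ : ∃ e : ℤ, ε = e ∧ e ≠ 0 := by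
    rcases hε with rfl | rfl
    exacts [⟨1, by norm_num, one_ne_zero⟩, ⟨-1, by norm_num, by norm_num⟩]
  have hD : det x y ≠ 0 := by rintro h; simp [h] at hdet
  rw [← Int.isCoprime_iff_gcd_eq_one] at hx hy
  obtain ⟨n, z, hz⟩ := exists_isConePath hx hy hD he
  exact ⟨n, z, hz.isPath hy, fun i hi hin => (hz.inCone i hi hin).exists_coeffs⟩
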